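/- (Generalized Courant–Fischer minimax theorem for a definite pencil) Let L₁ be an n×n real symmetric matrix and let L₂ be an n×n real symmetric positive definite matrix. For 1 ≤ k ≤ n, let λ_k denote the k-th smallest eigenvalue of the symmetric matrix L₂^{-1/2} L₁ L₂^{-1/2} (equivalently, the k-th smallest generalized eigenvalue of the pencil (L₁, L₂)). Then λ_k = min over all k-dimensional linear subspaces U of ℝⁿ of max over nonzero x ∈ U of (xᵀ L₁ x)/(xᵀ L₂ x). -/

import Mathlib

open Matrix
open scoped Classical

/-- The eigenvalues (with multiplicity) of a real symmetric matrix, sorted in increasing order;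
`sortedEigs A k` is the `(k+1)`-st smallest eigenvalue of `A` (junk value `0` when `A` is not
symmetric). -/
noncomputable def sortedEigs {n : ℕ} (A : Matrix (Fin n) (Fin n) ℝ) : Fin n → ℝ :=
  fun k =>
    if h : A.IsHermitian then
      (Multiset.sort (Multiset.map h.eigenvalues Finset.univ.val) (· ≤ ·)).getD k 0
    else 0

/-- The square root of a positive semidefinite matrix, as defined in the older Mathlib
(`Matrix.PosSemidef.sqrt`, since removed). -/
noncomputable def Matrix.PosSemidef.sqrt {n : Type*} [Fintype n] [DecidableEq n]
    {A : Matrix n n ℝ} (hA : A.PosSemidef) : Matrix n n ℝ :=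
  hA.1.eigenvectorUnitary.1 * diagonal (hA.1.eigenvalues · |>.sqrt) *
  (star hA.1.eigenvectorUnitary : Matrix n n ℝ)

lemma Matrix.PosSemidef.posSemidef_sqrt_isHermitian' {n : Type*} [Fintype n] [DecidableEq n]
    {A : Matrix n n ℝ} (hA : A.PosSemidef) : hA.sqrt.IsHermitian := by
  unfold Matrix.PosSemidef.sqrt
  simp [IsHermitian, conjTranspose_mul, Matrix.mul_assoc, Matrix.star_eq_conjTranspose,
    conjTranspose_eq_transpose_of_trivial, transpose_transpose]

lemma Matrix.PosSemidef.sqrt_mul_self' {n : Type*} [Fintype n] [DecidableEq n]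
    {A : Matrix n n ℝ} (hA : A.PosSemidef) : hA.sqrt * hA.sqrt = A := by
  unfold Matrix.PosSemidef.sqrt
  have hU : (star hA.1.eigenvectorUnitary : Matrix n n ℝ) * hA.1.eigenvectorUnitary.1 = 1 :=
    Unitary.star_mul_self_of_mem hA.1.eigenvectorUnitary.2
  have hD : diagonal (hA.1.eigenvalues · |>.sqrt) * diagonal (hA.1.eigenvalues · |>.sqrt)
      = diagonal hA.1.eigenvalues := by
    rw [diagonal_mul_diagonal]
    congr 1; ext i
    exact Real.mul_self_sqrt (hA.eigenvalues_nonneg i)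
  conv_rhs => rw [hA.1.spectral_theorem]
  calc _ = hA.1.eigenvectorUnitary.1 * diagonal (hA.1.eigenvalues · |>.sqrt) *
        ((star hA.1.eigenvectorUnitary : Matrix n n ℝ) * hA.1.eigenvectorUnitary.1) *
        diagonal (hA.1.eigenvalues · |>.sqrt) * (star hA.1.eigenvectorUnitary : Matrix n n ℝ) := by
          simp only [Matrix.mul_assoc]
    _ = _ := by
      rw [hU, Matrix.mul_one, Matrix.mul_assoc _ (diagonal _) (diagonal _), hD]
      rfl

lemma sortedEigs_spec {n : ℕ} (A : Matrix (Fin n) (Fin n) ℝ) (hA : A.IsHermitian) :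
    ∃ σ : Equiv.Perm (Fin n), (∀ k, sortedEigs A k = hA.eigenvalues (σ k)) ∧
      Monotone (sortedEigs A) := by
  set f := hA.eigenvalues
  refine ⟨Tuple.sort f, ?_⟩
  have hlist : Multiset.sort (Multiset.map f Finset.univ.val) (· ≤ ·)
      = List.ofFn (f ∘ Tuple.sort f) := by
    refine List.Perm.eq_of_pairwise' (r := (· ≤ ·)) ?_ ?_ ?_
    rotate_right
    · rw [← Multiset.coe_eq_coe]
      rw [Multiset.sort_eq]
      have : (List.ofFn (f ∘ Tuple.sort f) : Multiset ℝ)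
          = Multiset.map (f ∘ Tuple.sort f) Finset.univ.val := by
        simp [Multiset.map_coe, List.ofFn_eq_map, Finset.univ, Fintype.elems]
      rw [this]
      rw [← Multiset.map_map]
      congr 1
      have := Finset.map_univ_equiv (Tuple.sort f)
      symm
      calc Multiset.map (⇑(Tuple.sort f)) Finset.univ.val
          = (Finset.univ.map (Tuple.sort f).toEmbedding).val := rfl
        _ = Finset.univ.val := by rw [Finset.map_univ_equiv]
    · exact Multiset.pairwise_sort _ _
    · exact (List.sortedLE_ofFn_iff.mpr (Tuple.monotone_sort f)).pairwise
  have key : ∀ k : Fin n, sortedEigs A k = f (Tuple.sort f k) := by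
    intro k
    simp only [sortedEigs, dif_pos hA, hlist]
    erw [hlist]
    rw [List.getD_eq_getElem]
    · simp
    · simp [k.2]
  exact ⟨key, fun i j hij => by rw [key i, key j]; exact Tuple.monotone_sort f hij⟩

lemma sum_dot {n : ℕ} {ι : Type*} [Fintype ι] (v : ι → (Fin n → ℝ)) (w : Fin n → ℝ) :
    (∑ j, v j) ⬝ᵥ w = ∑ j, v j ⬝ᵥ w := by
  simp [dotProduct, Finset.sum_apply, Finset.sum_mul]
  exact Finset.sum_comm

lemma dot_sum {n : ℕ} {ι : Type*} [Fintype ι] (w : Fin n → ℝ) (v : ι → (Fin n → ℝ)) :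
    w ⬝ᵥ (∑ j, v j) = ∑ j, w ⬝ᵥ v j := by
  simp [dotProduct, Finset.sum_apply, Finset.mul_sum]
  exact Finset.sum_comm

lemma dot_sum_sum {n : ℕ} {ι : Type*} [Fintype ι] (w : Fin n → (Fin n → ℝ))
    (hw : ∀ i j, w i ⬝ᵥ w j = if i = j then (1:ℝ) else 0)
    (f : ι → Fin n) (hf : Function.Injective f) (c d : ι → ℝ) :
    (∑ j, c j • w (f j)) ⬝ᵥ (∑ j, d j • w (f j)) = ∑ j, c j * d j := by
  rw [sum_dot]
  have : ∀ j, (c j • w (f j)) ⬝ᵥ (∑ l, d l • w (f l)) = c j * d j := by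
    intro j
    rw [smul_dotProduct, dot_sum]
    simp only [dotProduct_smul, hw, hf.eq_iff, smul_eq_mul, mul_ite, mul_one, mul_zero]
    congr 1
    simp [hf.eq_iff]
  simp [this]

theorem cf_standard {n : ℕ} (M : Matrix (Fin n) (Fin n) ℝ) (hM : M.IsHermitian) (k : Fin n) :
    IsLeast {r : ℝ | ∃ U : Submodule ℝ (Fin n → ℝ), Module.finrank ℝ U = (k : ℕ) + 1 ∧
        IsGreatest {q : ℝ | ∃ x ∈ U, x ≠ 0 ∧ q = (x ⬝ᵥ M *ᵥ x) / (x ⬝ᵥ x)} r}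
      (sortedEigs M k) := by
  obtain ⟨σ, hσ, hmono⟩ := sortedEigs_spec M hM
  set ν := sortedEigs M with hν
  set w : Fin n → (Fin n → ℝ) := fun i => ⇑(hM.eigenvectorBasis (σ i)) with hwdef
  have hw : ∀ i j, w i ⬝ᵥ w j = if i = j then (1:ℝ) else 0 := by
    intro i j
    have h := (orthonormal_iff_ite.mp hM.eigenvectorBasis.orthonormal) (σ i) (σ j)
    rw [EuclideanSpace.inner_eq_star_dotProduct] at h
    rw [dotProduct_comm]
    simpa [σ.injective.eq_iff] using h
  have heig : ∀ i, M *ᵥ w i = ν i • w i := fun i => by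
    rw [hwdef]; simp only []; rw [hM.mulVec_eigenvectorBasis, hσ]
  have hpos : ∀ x : Fin n → ℝ, x ≠ 0 → 0 < x ⬝ᵥ x := fun x hx =>
    (Finset.sum_nonneg fun i _ => mul_self_nonneg (x i)).lt_of_ne'
      (fun h => hx (dotProduct_self_eq_zero.mp h))
  -- mulVec of linear combination of eigenvectors
  have hMx : ∀ {ι : Type} [Fintype ι] (f : ι → Fin n) (c : ι → ℝ),
      M *ᵥ (∑ j, c j • w (f j)) = ∑ j, (ν (f j) * c j) • w (f j) := by
    intro ι _ f c
    show M.mulVecLin (∑ j, c j • w (f j)) = _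
    rw [map_sum]
    congr 1; ext j
    rw [_root_.map_smul, Matrix.mulVecLin_apply, heig, smul_smul, mul_comm]
  -- generic: finrank of span of w ∘ f
  have hli : ∀ {ι : Type} [Fintype ι] (f : ι → Fin n), Function.Injective f →
      LinearIndependent ℝ (w ∘ f) := by
    intro ι _ f hf
    rw [Fintype.linearIndependent_iff]
    intro c hc j
    have h0 : ∑ j, c j * c j = 0 := by
      rw [← dot_sum_sum w hw f hf c c]
      show (∑ j, c j • (w ∘ f) j) ⬝ᵥ _ = 0
      rw [hc]
      exact zero_dotProduct _
    have := (Finset.sum_eq_zero_iff_of_nonneg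
      (fun i _ => mul_self_nonneg (c i))).mp h0 j (Finset.mem_univ j)
    exact mul_self_eq_zero.mp this
  have hinj : ∀ {ι : Type} [Fintype ι] (f : ι → Fin n) (hf : Function.Injective f)
      (c : ι → ℝ) (x : Fin n → ℝ), (∑ j, c j • w (f j)) = x →
      x ⬝ᵥ x = (∑ j, c j * c j) ∧ x ⬝ᵥ M *ᵥ x = ∑ j, c j * (ν (f j) * c j) := by
    intro ι _ f hf c x hc
    constructor
    · rw [← hc]; exact dot_sum_sum w hw f hf c c
    · rw [← hc, hMx f c]; exact dot_sum_sum w hw f hf c _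
  constructor
  · -- membership: U₀ = span of first k+1 sorted eigenvectors
    have hkn : (k : ℕ) + 1 ≤ n := k.2
    set f₀ : Fin ((k : ℕ) + 1) → Fin n := fun j => ⟨j, by have := j.2; omega⟩ with hf₀
    have hf₀inj : Function.Injective f₀ := fun a b hab =>
      Fin.ext (by simpa [f₀] using congrArg Fin.val hab)
    set j₀ : Fin ((k : ℕ) + 1) := ⟨k, lt_add_one _⟩ with hj₀
    have hj₀k : f₀ j₀ = k := Fin.ext rfl
    refine ⟨Submodule.span ℝ (Set.range (w ∘ f₀)), ?_, ⟨w k, ?_, ?_, ?_⟩, ?_⟩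
    · rw [finrank_span_eq_card (hli f₀ hf₀inj)]; simp
    · exact Submodule.subset_span ⟨j₀, by rw [Function.comp_apply, hj₀k]⟩
    · intro h
      have h1 := hw k k
      rw [h] at h1; simp at h1
    · have h1 := hw k k
      simp only [if_pos rfl] at h1
      rw [heig k, dotProduct_smul, smul_eq_mul, h1]
      norm_num
    · rintro q ⟨x, hxU, hx0, rfl⟩
      obtain ⟨c, hc⟩ := (Submodule.mem_span_range_iff_exists_fun ℝ).mp hxU
      simp only [Function.comp_apply] at hc
      obtain ⟨hxx, hMxx⟩ := hinj f₀ hf₀inj c x hc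
      rw [div_le_iff₀ (hpos x hx0), hxx, hMxx, Finset.mul_sum]
      refine Finset.sum_le_sum fun j _ => ?_
      have hle : ν (f₀ j) ≤ ν k := hmono (by
        rw [Fin.le_def]; have := j.2; simp [f₀]; omega)
      calc c j * (ν (f₀ j) * c j) = ν (f₀ j) * (c j * c j) := by ring
        _ ≤ ν k * (c j * c j) := mul_le_mul_of_nonneg_right hle (mul_self_nonneg _)
  · rintro r ⟨U, hU, hgr⟩
    have hkn : (k : ℕ) < n := k.2
    set f₁ : Fin (n - (k : ℕ)) → Fin n := fun j => ⟨(k : ℕ) + j, by have := j.2; omega⟩ with hf₁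
    have hf₁inj : Function.Injective f₁ := fun a b hab =>
      Fin.ext (by have := congrArg Fin.val hab; simp only [f₁] at this; omega)
    set W := Submodule.span ℝ (Set.range (w ∘ f₁)) with hWdef
    have hWrank : Module.finrank ℝ W = n - (k : ℕ) := by
      rw [finrank_span_eq_card (hli f₁ hf₁inj)]; simp
    have hsum := Submodule.finrank_sup_add_finrank_inf_eq U W
    have hle : Module.finrank ℝ ↥(U ⊔ W) ≤ n := by
      have h := Submodule.finrank_le (U ⊔ W)
      rwa [Module.finrank_fin_fun] at h
    rw [hU, hWrank] at hsum
    have hpos' : 0 < Module.finrank ℝ ↥(U ⊓ W) := by omega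
    have hne : U ⊓ W ≠ ⊥ := by
      intro h; rw [h, finrank_bot] at hpos'; exact lt_irrefl 0 hpos'
    obtain ⟨x, hxUW, hx0⟩ := Submodule.exists_mem_ne_zero_of_ne_bot hne
    obtain ⟨hxU, hxW⟩ := Submodule.mem_inf.mp hxUW
    obtain ⟨c, hc⟩ := (Submodule.mem_span_range_iff_exists_fun ℝ).mp hxW
    simp only [Function.comp_apply] at hc
    obtain ⟨hxx, hMxx⟩ := hinj f₁ hf₁inj c x hc
    have hνk : ν k ≤ x ⬝ᵥ M *ᵥ x / (x ⬝ᵥ x) := by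
      rw [le_div_iff₀ (hpos x hx0), hxx, hMxx, Finset.mul_sum]
      refine Finset.sum_le_sum fun j _ => ?_
      have hle' : ν k ≤ ν (f₁ j) := hmono (by rw [Fin.le_def]; simp [f₁])
      calc ν k * (c j * c j) ≤ ν (f₁ j) * (c j * c j) :=
            mul_le_mul_of_nonneg_right hle' (mul_self_nonneg _)
        _ = c j * (ν (f₁ j) * c j) := by ring
    exact hνk.trans (hgr.2 ⟨x, hxU, hx0, rfl⟩)

/-- Generalized Courant–Fischer minimax theorem for a definite pencil: if `L₁` is real symmetric
and `L₂` is SPD, then the `(k+1)`-st smallest eigenvalue of `L₂^{-1/2} L₁ L₂^{-1/2}` (i.e. the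
`(k+1)`-st smallest generalized eigenvalue of the pencil `(L₁, L₂)`) equals the minimum, over all
`(k+1)`-dimensional subspaces `U` of `ℝⁿ`, of the maximum over nonzero `x ∈ U` of the Rayleigh
quotient `(xᵀ L₁ x)/(xᵀ L₂ x)`. -/
theorem generalized_courant_fischer {n : ℕ} (L₁ L₂ : Matrix (Fin n) (Fin n) ℝ)
    (hL₁ : L₁.IsHermitian) (hL₂ : L₂.PosDef) (k : Fin n) :
    IsLeast {r : ℝ | ∃ U : Submodule ℝ (Fin n → ℝ), Module.finrank ℝ U = (k : ℕ) + 1 ∧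
        IsGreatest {q : ℝ | ∃ x ∈ U, x ≠ 0 ∧
          q = (x ⬝ᵥ L₁ *ᵥ x) / (x ⬝ᵥ L₂ *ᵥ x)} r}
      (sortedEigs (hL₂.posSemidef.sqrt⁻¹ * L₁ * hL₂.posSemidef.sqrt⁻¹) k) := by
  set S := hL₂.posSemidef.sqrt with hSdef
  have hSherm : S.IsHermitian := hL₂.posSemidef.posSemidef_sqrt_isHermitian'
  have hSS : S * S = L₂ := hL₂.posSemidef.sqrt_mul_self'
  have hdet : IsUnit S.det := by
    have hm : S.det * S.det = L₂.det := by rw [← det_mul, hSS]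
    refine isUnit_iff_ne_zero.mpr fun h => ?_
    rw [h, zero_mul] at hm
    exact hL₂.det_pos.ne' hm.symm
  have hSinv : S⁻¹ * S = 1 := nonsing_inv_mul S hdet
  have hinvS : S * S⁻¹ = 1 := mul_nonsing_inv S hdet
  have hSinvherm : (S⁻¹).IsHermitian := hSherm.inv
  set M := S⁻¹ * L₁ * S⁻¹ with hMdef
  have hMherm : M.IsHermitian := by
    show Mᴴ = M
    rw [hMdef, conjTranspose_mul, conjTranspose_mul, hSinvherm.eq, hL₁.eq, ← mul_assoc]
  have hsymmdot : ∀ (A : Matrix (Fin n) (Fin n) ℝ), A.IsHermitian →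
      ∀ x z : Fin n → ℝ, (A *ᵥ x) ⬝ᵥ z = x ⬝ᵥ (A *ᵥ z) := by
    intro A hA x z
    have hAt : Aᵀ = A := by rw [← conjTranspose_eq_transpose_of_trivial, hA.eq]
    rw [dotProduct_mulVec x A z]
    congr 1
    rw [← mulVec_transpose, hAt]
  have key1 : ∀ x : Fin n → ℝ, (S *ᵥ x) ⬝ᵥ M *ᵥ (S *ᵥ x) = x ⬝ᵥ L₁ *ᵥ x := by
    intro x
    rw [hsymmdot S hSherm, mulVec_mulVec, mulVec_mulVec]
    have hSMS : S * M * S = L₁ := by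
      rw [hMdef]
      simp only [← Matrix.mul_assoc]
      rw [hinvS, one_mul, Matrix.mul_assoc, hSinv, mul_one]
    rw [hSMS]
  have key2 : ∀ x : Fin n → ℝ, (S *ᵥ x) ⬝ᵥ (S *ᵥ x) = x ⬝ᵥ L₂ *ᵥ x := by
    intro x
    rw [hsymmdot S hSherm, mulVec_mulVec, hSS]
  have hcomp1 : S.mulVecLin ∘ₗ S⁻¹.mulVecLin = LinearMap.id := by
    rw [← mulVecLin_mul, hinvS, mulVecLin_one]
  have hcomp2 : S⁻¹.mulVecLin ∘ₗ S.mulVecLin = LinearMap.id := by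
    rw [← mulVecLin_mul, hSinv, mulVecLin_one]
  set eS : (Fin n → ℝ) ≃ₗ[ℝ] (Fin n → ℝ) := LinearEquiv.ofLinear S.mulVecLin S⁻¹.mulVecLin hcomp1 hcomp2 with heSdef
  have heS : ∀ x, eS x = S *ᵥ x := fun x => rfl
  have hQ : ∀ U : Submodule ℝ (Fin n → ℝ),
      {q : ℝ | ∃ x ∈ U, x ≠ 0 ∧ q = (x ⬝ᵥ L₁ *ᵥ x) / (x ⬝ᵥ L₂ *ᵥ x)}
      = {q : ℝ | ∃ y ∈ U.map (eS : (Fin n → ℝ) →ₗ[ℝ] (Fin n → ℝ)), y ≠ 0 ∧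
          q = (y ⬝ᵥ M *ᵥ y) / (y ⬝ᵥ y)} := by
    intro U; ext q
    constructor
    · rintro ⟨x, hxU, hx0, rfl⟩
      refine ⟨eS x, Submodule.mem_map_of_mem hxU, (LinearEquiv.map_ne_zero_iff eS).mpr hx0, ?_⟩
      rw [heS x, key1 x, key2 x]
    · rintro ⟨y, hyU, hy0, rfl⟩
      obtain ⟨x, hxU, rfl⟩ := Submodule.mem_map.mp hyU
      refine ⟨x, hxU, (LinearEquiv.map_ne_zero_iff eS).mp (by exact hy0), ?_⟩
      rw [show ((eS : (Fin n → ℝ) →ₗ[ℝ] (Fin n → ℝ)) x : Fin n → ℝ) = S *ᵥ x from rfl,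
        key1 x, key2 x]
  have hmain := cf_standard M hMherm k
  have hset : {r : ℝ | ∃ U : Submodule ℝ (Fin n → ℝ), Module.finrank ℝ U = (k : ℕ) + 1 ∧
        IsGreatest {q : ℝ | ∃ x ∈ U, x ≠ 0 ∧
          q = (x ⬝ᵥ L₁ *ᵥ x) / (x ⬝ᵥ L₂ *ᵥ x)} r}
      = {r : ℝ | ∃ U : Submodule ℝ (Fin n → ℝ), Module.finrank ℝ U = (k : ℕ) + 1 ∧
        IsGreatest {q : ℝ | ∃ x ∈ U, x ≠ 0 ∧ q = (x ⬝ᵥ M *ᵥ x) / (x ⬝ᵥ x)} r} := by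
    ext r
    constructor
    · rintro ⟨U, hU, hgr⟩
      refine ⟨U.map (eS : (Fin n → ℝ) →ₗ[ℝ] (Fin n → ℝ)), ?_, ?_⟩
      · rw [LinearEquiv.finrank_map_eq]; exact hU
      · rwa [hQ U] at hgr
    · rintro ⟨V, hV, hgr⟩
      refine ⟨V.map (eS.symm : (Fin n → ℝ) →ₗ[ℝ] (Fin n → ℝ)), ?_, ?_⟩
      · rw [LinearEquiv.finrank_map_eq]; exact hV
      · rw [hQ]
        have hVV : (V.map (eS.symm : (Fin n → ℝ) →ₗ[ℝ] (Fin n → ℝ))).map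
            (eS : (Fin n → ℝ) →ₗ[ℝ] (Fin n → ℝ)) = V := by
          rw [← Submodule.map_comp]
          simp
        rwa [hVV]
  rw [hset]
  exact hmain
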